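/- arXiv:2210.05238 — 7 statements merged into one kernel-verified Lean document; each statement's English description precedes it below -/
import Mathlib

section
/- A binary linear code C with generator matrix G is a linear complementary dual (LCD) code (i.e., C ∩ C⊥ = {0}) if and only if the k×k matrix G·Gᵀ is invertible over F₂. -/
open Matrix

/-- The dual code of a binary code `C`: all vectors orthogonal to every codeword. -/
def dualCode {ι : Type*} [Fintype ι] (C : Submodule (ZMod 2) (ι → ZMod 2)) :
    Submodule (ZMod 2) (ι → ZMod 2) where
  carrier := {x | ∀ y ∈ C, x ⬝ᵥ y = 0}
  add_mem' := by
    intro a b ha hb y hy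
    simp [add_dotProduct, ha y hy, hb y hy]
  zero_mem' := by
    intro y hy
    simp
  smul_mem' := by
    intro c a ha y hy
    simp [smul_dotProduct, ha y hy]

/-- The hull of a binary code: `C ∩ C⊥`. -/
def hull {ι : Type*} [Fintype ι] (C : Submodule (ZMod 2) (ι → ZMod 2)) :
    Submodule (ZMod 2) (ι → ZMod 2) := C ⊓ dualCode C

/-- The hull dimension of a binary code. -/
noncomputable def hullDim {ι : Type*} [Fintype ι] (C : Submodule (ZMod 2) (ι → ZMod 2)) : ℕ :=
  Module.finrank (ZMod 2) (hull C)

/-- A binary code is LCD if its hull is trivial. -/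
def IsLCD {ι : Type*} [Fintype ι] (C : Submodule (ZMod 2) (ι → ZMod 2)) : Prop :=
  hull C = ⊥

/-- `G` is a generator matrix of `C`: its rows are linearly independent and span `C`. -/
def IsGenMat {κ ι : Type*} [Fintype ι] (G : Matrix κ ι (ZMod 2))
    (C : Submodule (ZMod 2) (ι → ZMod 2)) : Prop :=
  LinearIndependent (ZMod 2) (fun i => G i) ∧
    Submodule.span (ZMod 2) (Set.range fun i => G i) = C

/-- `C` has minimum distance `d`. -/
def MinDist {ι : Type*} [Fintype ι] [DecidableEq ι] (C : Submodule (ZMod 2) (ι → ZMod 2))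
    (d : ℕ) : Prop :=
  (∀ x ∈ C, x ≠ 0 → d ≤ hammingNorm x) ∧ ∃ x ∈ C, x ≠ 0 ∧ hammingNorm x = d

/-- Index type for the columns of the simplex generator matrix: nonzero vectors of `F₂^k`. -/
abbrev SimplexIdx (k : ℕ) := {v : Fin k → ZMod 2 // v ≠ 0}

/-- Generator matrix of the simplex code: columns are all nonzero vectors of `F₂^k`. -/
def simplexGen (k : ℕ) : Matrix (Fin k) (SimplexIdx k) (ZMod 2) :=
  Matrix.of fun i v => v.1 i

/-- The simplex code of dimension `k`. -/
def simplexCode (k : ℕ) : Submodule (ZMod 2) (SimplexIdx k → ZMod 2) :=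
  Submodule.span (ZMod 2) (Set.range fun i => simplexGen k i)

/-- A binary linear code `C` with generator matrix `G` is LCD
iff `G * Gᵀ` is invertible over `F₂`. -/
theorem lcd_iff_isUnit_mul_transpose {n k : ℕ} (C : Submodule (ZMod 2) (Fin n → ZMod 2))
    (G : Matrix (Fin k) (Fin n) (ZMod 2)) (hG : IsGenMat G C) :
    IsLCD C ↔ IsUnit (G * Gᵀ) := by

  obtain ⟨hind, hspan⟩ := hG
  have hmem : ∀ c, c ∈ C ↔ ∃ x, x ᵥ* G = c := by
    intro c
    rw [← hspan, show (Set.range fun i => G i) = Set.range G.row from rfl, ← range_vecMulLinear]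
    exact ⟨fun ⟨x, hx⟩ => ⟨x, hx⟩, fun ⟨x, hx⟩ => ⟨x, hx⟩⟩
  have hGinj : ∀ x : Fin k → ZMod 2, x ᵥ* G = 0 → x = 0 := fun x hx =>
    Matrix.vecMul_injective_iff.mpr hind (hx.trans (Matrix.zero_vecMul G).symm)
  have key : ∀ x : Fin k → ZMod 2, ∀ i, (x ᵥ* (G * Gᵀ)) i = (x ᵥ* G) ⬝ᵥ G i := by
    intro x i
    rw [← Matrix.vecMul_vecMul, Matrix.vecMul_transpose, Matrix.mulVec,
      dotProduct_comm]
  rw [IsLCD, hull, Submodule.eq_bot_iff, ← Matrix.vecMul_injective_iff_isUnit]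
  constructor
  · intro h
    rw [← Matrix.coe_vecMulLinear, injective_iff_map_eq_zero]
    intro x hx
    have hx' : x ᵥ* (G * Gᵀ) = 0 := hx
    have hcC : x ᵥ* G ∈ C := (hmem _).mpr ⟨x, rfl⟩
    have hcd : x ᵥ* G ∈ dualCode C := by
      intro y hy
      rw [← hspan] at hy
      induction hy using Submodule.span_induction with
      | mem y hy =>
        obtain ⟨i, rfl⟩ := hy
        rw [← key x i, hx']
        rfl
      | zero => simp
      | add _ _ _ _ h1 h2 => simp [dotProduct_add, h1, h2]
      | smul a _ _ h1 => simp [dotProduct_smul, h1]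
    exact hGinj x (h _ ⟨hcC, hcd⟩)
  · intro h c hc
    obtain ⟨hcC, hcd⟩ := hc
    obtain ⟨x, rfl⟩ := (hmem c).mp hcC
    have hx : x ᵥ* (G * Gᵀ) = 0 := by
      ext i
      rw [key x i]
      exact hcd (G i) (hspan ▸ Submodule.subset_span ⟨i, rfl⟩)
    have hx0 : x = 0 := h (show (G * Gᵀ).vecMul x = (G * Gᵀ).vecMul 0 by
      simp only [Matrix.zero_vecMul]
      exact hx)
    simp [hx0]
end

section
/- If C₁ is a reduced code of a binary [n,k] linear code C and the hull dimension of C₁ is r ≥ 2, then the hull dimension of C is at least r − 1 ≥ 1; in particular C is not an LCD code. -/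
open Matrix

/-- Dot with a fixed vector on the left, as a linear map. -/
def dotL {ι : Type*} [Fintype ι] (x : ι → ZMod 2) : (ι → ZMod 2) →ₗ[ZMod 2] ZMod 2 where
  toFun y := x ⬝ᵥ y
  map_add' a b := dotProduct_add x a b
  map_smul' c a := by simp

/-- Dot with a fixed vector on the right, as a linear map. -/
def dotR {ι : Type*} [Fintype ι] (x : ι → ZMod 2) : (ι → ZMod 2) →ₗ[ZMod 2] ZMod 2 where
  toFun y := y ⬝ᵥ x
  map_add' a b := add_dotProduct a b x
  map_smul' c a := by simp

/-- The embedding `x ↦ (0, x)` as a linear map. -/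
def eSum (m n' : ℕ) : (Fin n' → ZMod 2) →ₗ[ZMod 2] (Fin m ⊕ Fin n' → ZMod 2) where
  toFun x := Sum.elim 0 x
  map_add' a b := by funext j; cases j <;> simp
  map_smul' c a := by funext j; cases j <;> simp

lemma elim_dot {m n' : ℕ} (x : Fin n' → ZMod 2) (y : Fin m ⊕ Fin n' → ZMod 2) :
    (Sum.elim 0 x : Fin m ⊕ Fin n' → ZMod 2) ⬝ᵥ y = x ⬝ᵥ (fun j => y (Sum.inr j)) := by
  simp [dotProduct, Fintype.sum_sum_type]

/-- If `C₁` is a reduced code of a binary `[n,k]` code `C`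
(i.e. `C` has a generator matrix of block form `[[1ₘ, u],[0, G₁]]` with `G₁`
generating `C₁`) and `hullDim C₁ = r ≥ 2`, then `hullDim C ≥ r - 1 ≥ 1`;
in particular `C` is not LCD. -/
theorem reduced_code_hull {m n' k' : ℕ}
    (C : Submodule (ZMod 2) (Fin m ⊕ Fin n' → ZMod 2))
    (C₁ : Submodule (ZMod 2) (Fin n' → ZMod 2))
    (u : Matrix (Fin 1) (Fin n') (ZMod 2)) (G₁ : Matrix (Fin k') (Fin n') (ZMod 2))
    (hG₁ : IsGenMat G₁ C₁)
    (hG : IsGenMat (Matrix.fromBlocks (Matrix.of fun _ _ => (1 : ZMod 2)) u 0 G₁) C)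
    (r : ℕ) (hr : hullDim C₁ = r) (h2 : 2 ≤ r) :
    r - 1 ≤ hullDim C ∧ 1 ≤ hullDim C ∧ ¬ IsLCD C := by
  classical
  set G : Matrix (Fin 1 ⊕ Fin k') (Fin m ⊕ Fin n') (ZMod 2) :=
    Matrix.fromBlocks (Matrix.of fun _ _ => (1 : ZMod 2)) u 0 G₁ with hGdef
  -- key membership lemma
  have key : ∀ x : Fin n' → ZMod 2, x ∈ hull C₁ → x ⬝ᵥ (u 0) = 0 →
      eSum m n' x ∈ hull C := by
    intro x hx hu0
    obtain ⟨hxC, hxD⟩ := hx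
    constructor
    · -- membership in C
      rw [← hG.2]
      have hx1 : x ∈ Submodule.span (ZMod 2) (Set.range fun i => G₁ i) := by
        rw [hG₁.2]; exact hxC
      have hmap : eSum m n' x ∈
          Submodule.map (eSum m n') (Submodule.span (ZMod 2) (Set.range fun i => G₁ i)) :=
        Submodule.mem_map_of_mem hx1
      rw [Submodule.map_span] at hmap
      refine Submodule.span_mono ?_ hmap
      rintro _ ⟨_, ⟨i, rfl⟩, rfl⟩
      refine ⟨Sum.inr i, ?_⟩
      funext j
      cases j with
      | inl j => simp [hGdef, eSum]
      | inr j => simp [hGdef, eSum]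
    · -- membership in dual of C
      intro y hy
      rw [← hG.2] at hy
      have hle : Submodule.span (ZMod 2) (Set.range fun i => G i) ≤
          LinearMap.ker (dotL (eSum m n' x)) := by
        rw [Submodule.span_le]
        rintro _ ⟨i, rfl⟩
        simp only [SetLike.mem_coe, LinearMap.mem_ker]
        show (Sum.elim 0 x : Fin m ⊕ Fin n' → ZMod 2) ⬝ᵥ G i = 0
        rw [elim_dot]
        cases i with
        | inl i =>
          have h1 : (fun j => G (Sum.inl i) (Sum.inr j)) = u 0 := by
            funext j
            have : i = 0 := Subsingleton.elim i 0
            simp [hGdef, this]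
          rw [h1]; exact hu0
        | inr i =>
          have h1 : (fun j => G (Sum.inr i) (Sum.inr j)) = G₁ i := by
            funext j; simp [hGdef]
          rw [h1]
          exact hxD (G₁ i) (by rw [← hG₁.2]; exact Submodule.subset_span ⟨i, rfl⟩)
      exact hle hy
  -- the functional on the hull of C₁
  let φ : (hull C₁) →ₗ[ZMod 2] ZMod 2 := (dotR (u 0)).comp (hull C₁).subtype
  set K := LinearMap.ker φ with hKdef
  have hrange : Module.finrank (ZMod 2) (LinearMap.range φ) ≤ 1 := by
    have := Submodule.finrank_le (LinearMap.range φ)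
    simpa using this
  have hrn := LinearMap.finrank_range_add_finrank_ker φ
  rw [show Module.finrank (ZMod 2) (hull C₁) = r from hr] at hrn
  have hK : r - 1 ≤ Module.finrank (ZMod 2) K := by rw [hKdef]; omega
  -- map K into hull C
  have hmem : ∀ z : K, eSum m n' ((z : hull C₁) : Fin n' → ZMod 2) ∈ hull C := by
    intro z
    refine key _ (z : hull C₁).2 ?_
    exact LinearMap.mem_ker.mp z.2
  let χ : K →ₗ[ZMod 2] (hull C) :=
    LinearMap.codRestrict (hull C)
      ((eSum m n').comp ((hull C₁).subtype.comp K.subtype)) hmem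
  have hinj : Function.Injective χ := by
    intro a b hab
    have h1 : eSum m n' ((a : hull C₁) : Fin n' → ZMod 2)
        = eSum m n' ((b : hull C₁) : Fin n' → ZMod 2) := by
      have := congrArg (Subtype.val) hab
      simpa [χ, LinearMap.codRestrict] using this
    have h2 : ((a : hull C₁) : Fin n' → ZMod 2) = ((b : hull C₁) : Fin n' → ZMod 2) := by
      funext j
      exact congrFun h1 (Sum.inr j)
    exact Subtype.ext (Subtype.ext h2)
  have hfin : Module.finrank (ZMod 2) K ≤ Module.finrank (ZMod 2) (hull C) :=
    LinearMap.finrank_le_finrank_of_injective hinj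
  have hmain : r - 1 ≤ hullDim C := le_trans hK hfin
  have h1le : 1 ≤ hullDim C := le_trans (by omega) hmain
  refine ⟨hmain, h1le, ?_⟩
  intro hLCD
  rw [IsLCD] at hLCD
  have : hullDim C = 0 := by
    unfold hullDim
    rw [hLCD]
    exact finrank_bot _ _
  omega
end

section
/- For every k ≥ 2, the (2^k − 1) × (2^k − 1) matrix P_k over the rationals (whose rows are the 2^k − 1 nonzero codewords of the simplex code S_k, viewed as 0-1 matrices) is invertible, with inverse P_k^{−1} = (1/2^{k−1})·(J_k − 2Q_k), where J_k is the all-ones matrix and Q_k = J_k − P_k. -/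
open Matrix

/-- The matrix `P_k` over `ℚ`: its rows are the `2^k - 1` nonzero codewords of the
simplex code `S_k`, viewed with 0-1 rational entries.  The row indexed by the nonzero
message `v` has, at the column indexed by the nonzero vector `w`, the entry `v ⬝ᵥ w`
computed in `F₂` and lifted to `ℚ`. -/
def Pmat (k : ℕ) : Matrix (SimplexIdx k) (SimplexIdx k) ℚ :=
  Matrix.of fun v w => if v.1 ⬝ᵥ w.1 = (1 : ZMod 2) then 1 else 0

/-- The all-ones matrix `J_k`. -/
def Jmat (k : ℕ) : Matrix (SimplexIdx k) (SimplexIdx k) ℚ :=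
  Matrix.of fun _ _ => 1

/-- `Q_k = J_k - P_k`. -/
def Qmat (k : ℕ) : Matrix (SimplexIdx k) (SimplexIdx k) ℚ :=
  Jmat k - Pmat k

open Finset

lemma zmod2_cases (a : ZMod 2) : a = 0 ∨ a = 1 := by revert a; decide

lemma card_shift {k : ℕ} (p q : (Fin k → ZMod 2) → Prop) [DecidablePred p] [DecidablePred q]
    (a : Fin k → ZMod 2)
    (hpq : ∀ u, p u → q (u + a)) (hqp : ∀ u, q u → p (u + a)) :
    (univ.filter p).card = (univ.filter q).card := by
  have haa : ∀ u : Fin k → ZMod 2, u + a + a = u := by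
    intro u; ext i; simp [add_assoc, CharTwo.add_self_eq_zero]
  apply Finset.card_bij' (fun u _ => u + a) (fun u _ => u + a)
  · intro u hu; simp only [mem_filter, mem_univ, true_and] at *; exact hpq u hu
  · intro u hu; simp only [mem_filter, mem_univ, true_and] at *; exact hqp u hu
  · intro u _; exact haa u
  · intro u _; exact haa u

lemma exists_dot_one {k : ℕ} {v : Fin k → ZMod 2} (hv : v ≠ 0) :
    ∃ a, v ⬝ᵥ a = 1 := by
  obtain ⟨i, hi⟩ := Function.ne_iff.mp hv
  have : v i = 1 := (zmod2_cases (v i)).resolve_left hi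
  exact ⟨Pi.single i 1, by simp [dotProduct_single, this]⟩

lemma exists_dot_aux {k : ℕ} {v w : Fin k → ZMod 2} (hw : w ≠ 0) (hvw : v ≠ w) :
    ∃ a, v ⬝ᵥ a = 0 ∧ w ⬝ᵥ a = 1 := by
  obtain ⟨j, hj⟩ := Function.ne_iff.mp hw
  have hwj : w j = 1 := (zmod2_cases (w j)).resolve_left hj
  rcases zmod2_cases (v j) with hvj | hvj
  · exact ⟨Pi.single j 1, by simp [dotProduct_single, hvj, hwj]⟩
  · obtain ⟨i, hi⟩ := Function.ne_iff.mp hvw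
    rcases zmod2_cases (v i) with hvi | hvi
    · have hwi : w i = 1 := (zmod2_cases (w i)).resolve_left (fun h => hi (hvi.trans h.symm))
      exact ⟨Pi.single i 1, by simp [dotProduct_single, hvi, hwi]⟩
    · have hwi : w i = 0 := (zmod2_cases (w i)).resolve_right (fun h => hi (hvi.trans h.symm))
      refine ⟨Pi.single i 1 + Pi.single j 1, ?_, ?_⟩
      · rw [dotProduct_add]; simp [dotProduct_single, hvi, hvj]; decide
      · rw [dotProduct_add]; simp [dotProduct_single, hwi, hwj]

lemma card_dot_one {k : ℕ} (hk : 1 ≤ k) {v : Fin k → ZMod 2} (hv : v ≠ 0) :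
    (univ.filter fun x => v ⬝ᵥ x = 1).card = 2 ^ (k - 1) := by
  obtain ⟨a, ha⟩ := exists_dot_one hv
  have h1 : (univ.filter fun x => v ⬝ᵥ x = 1).card = (univ.filter fun x => ¬ v ⬝ᵥ x = 1).card := by
    apply card_shift
    · intro u hu; rw [dotProduct_add, hu, ha]; decide
    · intro u hu
      have : v ⬝ᵥ u = 0 := by rcases zmod2_cases (v ⬝ᵥ u) with h | h; exact h; exact absurd h hu
      rw [dotProduct_add, this, ha, zero_add]
  have h2 := Finset.card_filter_add_card_filter_not (s := (univ : Finset (Fin k → ZMod 2)))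
      (p := fun x => v ⬝ᵥ x = 1)
  rw [← h1] at h2
  have h3 : (univ : Finset (Fin k → ZMod 2)).card = 2 ^ k := by
    rw [Finset.card_univ]; simp
  have h4 : 2 ^ k = 2 ^ (k - 1) * 2 := by
    rw [← pow_succ]; congr 1; omega
  omega

open Matrix in
lemma entry_aux {k : ℕ} (hk : 1 ≤ k) (v w : SimplexIdx k) :
    (Pmat k * (Jmat k - 2 • Qmat k)) v w = if v = w then (2:ℚ)^(k-1) else 0 := by
  rw [Matrix.mul_apply]
  have hB : ∀ u : SimplexIdx k, (Jmat k - 2 • Qmat k) u w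
      = if w.1 ⬝ᵥ u.1 = 1 then (1:ℚ) else -1 := by
    intro u
    simp only [Jmat, Qmat, Pmat, Matrix.sub_apply, Matrix.smul_apply, Matrix.of_apply,
      dotProduct_comm u.1 w.1]
    split <;> ring
  have key : ∀ (F : (Fin k → ZMod 2) → ℚ), F 0 = 0 →
      ∑ u : SimplexIdx k, F u.1 = ∑ x : Fin k → ZMod 2, F x := by
    intro F hF0
    have h1 : ∑ x ∈ univ.filter (fun x : Fin k → ZMod 2 => x = 0), F x = 0 := by
      rw [Finset.sum_filter]
      simp [hF0]
    rw [← Finset.sum_filter_add_sum_filter_not univ (fun x : Fin k → ZMod 2 => x = 0) F, h1,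
      zero_add]
    exact (Finset.sum_subtype _ (by simp) F).symm
  by_cases hvw : v = w
  · subst hvw
    rw [if_pos rfl]
    have hterm : ∀ u : SimplexIdx k, Pmat k v u * (Jmat k - 2 • Qmat k) u v
        = (fun x => if v.1 ⬝ᵥ x = 1 then (1:ℚ) else 0) u.1 := by
      intro u
      rw [hB]
      simp only [Pmat, Matrix.of_apply]
      by_cases h : v.1 ⬝ᵥ u.1 = 1 <;> simp [h]
    rw [Finset.sum_congr rfl (fun u _ => hterm u),
      key (fun x => if v.1 ⬝ᵥ x = 1 then (1:ℚ) else 0) (by simp), Finset.sum_boole,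
      card_dot_one hk v.2]
    push_cast
    ring
  · rw [if_neg hvw]
    have hvw1 : v.1 ≠ w.1 := fun h => hvw (Subtype.ext h)
    have hne : (1:ZMod 2) ≠ 0 := by decide
    have hterm : ∀ u : SimplexIdx k, Pmat k v u * (Jmat k - 2 • Qmat k) u w
        = (fun x => (if (v.1 ⬝ᵥ x = 1 ∧ w.1 ⬝ᵥ x = 1) then (1:ℚ) else 0)
             - (if (v.1 ⬝ᵥ x = 1 ∧ w.1 ⬝ᵥ x = 0) then (1:ℚ) else 0)) u.1 := by
      intro u
      rw [hB]
      simp only [Pmat, Matrix.of_apply]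
      by_cases h1 : v.1 ⬝ᵥ u.1 = 1
      · by_cases h2 : w.1 ⬝ᵥ u.1 = 1
        · simp [h1, h2]
        · have h2' : w.1 ⬝ᵥ u.1 = 0 := (zmod2_cases _).resolve_right h2
          simp [h1, h2, h2']
      · simp [h1]
    rw [Finset.sum_congr rfl (fun u _ => hterm u),
      key (fun x => (if (v.1 ⬝ᵥ x = 1 ∧ w.1 ⬝ᵥ x = 1) then (1:ℚ) else 0)
             - (if (v.1 ⬝ᵥ x = 1 ∧ w.1 ⬝ᵥ x = 0) then (1:ℚ) else 0)) (by simp),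
      Finset.sum_sub_distrib, Finset.sum_boole, Finset.sum_boole]
    obtain ⟨a, ha0, ha1⟩ := exists_dot_aux w.2 hvw1
    have hcc := card_shift (fun x => v.1 ⬝ᵥ x = 1 ∧ w.1 ⬝ᵥ x = 1)
      (fun x => v.1 ⬝ᵥ x = 1 ∧ w.1 ⬝ᵥ x = 0) a
      (by rintro u ⟨h1, h2⟩
          refine ⟨?_, ?_⟩
          · rw [dotProduct_add, h1, ha0]; decide
          · rw [dotProduct_add, h2, ha1]; decide)
      (by rintro u ⟨h1, h2⟩
          refine ⟨?_, ?_⟩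
          · rw [dotProduct_add, h1, ha0]; decide
          · rw [dotProduct_add, h2, ha1]; decide)
    rw [hcc]
    ring

/-- For `k ≥ 2`, the matrix `P_k` over `ℚ` is invertible, with
`P_k⁻¹ = (1/2^(k-1)) • (J_k - 2•Q_k)`. -/
theorem Pmat_isUnit_and_inv {k : ℕ} (hk : 2 ≤ k) :
    IsUnit (Pmat k) ∧ (Pmat k)⁻¹ = ((1 : ℚ) / 2 ^ (k - 1)) • (Jmat k - 2 • Qmat k) := by
  have hk1 : 1 ≤ k := le_trans (by norm_num) hk
  have hc : ((2:ℚ))^(k-1) ≠ 0 := by positivity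
  have hM : Pmat k * (Jmat k - 2 • Qmat k)
      = ((2:ℚ)^(k-1)) • (1 : Matrix (SimplexIdx k) (SimplexIdx k) ℚ) := by
    ext v w
    rw [entry_aux hk1 v w]
    by_cases h : v = w <;> simp [h, Matrix.smul_apply, Matrix.one_apply]
  have key : Pmat k * (((1:ℚ)/2^(k-1)) • (Jmat k - 2 • Qmat k)) = 1 := by
    rw [Matrix.mul_smul, hM, smul_smul, one_div, inv_mul_cancel₀ hc, one_smul]
  have key2 : (((1:ℚ)/2^(k-1)) • (Jmat k - 2 • Qmat k)) * Pmat k = 1 :=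
    mul_eq_one_comm.mp key
  exact ⟨⟨⟨Pmat k, _, key, key2⟩, rfl⟩, Matrix.inv_eq_right_inv key⟩
end

section
/- Each row of the matrix P_k has exactly 2^{k−1} ones and 2^{k−1} − 1 zeros, for all k ≥ 2. -/
open Matrix

/-- Each row of `P_k` has exactly `2^(k-1)` ones and `2^(k-1) - 1` zeros. -/
theorem Pmat_row_count {k : ℕ} (hk : 2 ≤ k) (v : SimplexIdx k) :
    (Finset.univ.filter fun w => Pmat k v w = 1).card = 2 ^ (k - 1) ∧
    (Finset.univ.filter fun w => Pmat k v w = 0).card = 2 ^ (k - 1) - 1 := by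
  classical
  have hone : ∀ x : ZMod 2, x ≠ 0 → x = 1 := by decide
  obtain ⟨i, hi⟩ : ∃ i, v.1 i ≠ 0 := by
    by_contra h; push_neg at h; exact v.2 (funext h)
  set w₀ : Fin k → ZMod 2 := Pi.single i 1 with hw₀def
  have hw₀ : v.1 ⬝ᵥ w₀ = 1 := by
    simp [hw₀def, dotProduct_single, hone _ hi]
  set S1 : Finset (Fin k → ZMod 2) :=
    Finset.univ.filter (fun w => v.1 ⬝ᵥ w = 1) with hS1
  set S0 : Finset (Fin k → ZMod 2) :=
    Finset.univ.filter (fun w => v.1 ⬝ᵥ w = 0) with hS0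
  -- bijection between S0 and S1 by adding w₀
  have hcard_eq : S1.card = S0.card := by
    apply Finset.card_bij (fun x _ => x + w₀)
    · intro a ha
      simp only [hS0, hS1, Finset.mem_filter, Finset.mem_univ, true_and] at ha ⊢
      rw [dotProduct_add, ha, hw₀]
      decide
    · intro a ha b hb hab
      simpa using congrArg (fun x => x - w₀) hab
    · intro b hb
      refine ⟨b + w₀, ?_, ?_⟩
      · simp only [hS0, hS1, Finset.mem_filter, Finset.mem_univ, true_and] at hb ⊢
        rw [dotProduct_add, hb, hw₀]
        decide
      · have : w₀ + w₀ = 0 := by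
          funext j
          have : ∀ x : ZMod 2, x + x = 0 := by decide
          simp [Pi.add_apply, this]
        rw [add_assoc, this, add_zero]
  have hsum : S0.card + S1.card = 2 ^ k := by
    have := Finset.card_filter_add_card_filter_not
      (s := (Finset.univ : Finset (Fin k → ZMod 2)))
      (p := fun w => v.1 ⬝ᵥ w = 0)
    have hiff : ∀ w : Fin k → ZMod 2, (¬ v.1 ⬝ᵥ w = 0) ↔ v.1 ⬝ᵥ w = 1 := by
      intro w
      constructor
      · intro h; exact hone _ h
      · intro h h0; rw [h] at h0; exact one_ne_zero h0
    rw [Finset.filter_congr (fun w _ => hiff w)] at this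
    rw [hS0, hS1]
    rw [this]
    simp [ZMod.card]
  have hS1card : S1.card = 2 ^ (k - 1) := by
    obtain ⟨m, rfl⟩ : ∃ m, k = m + 2 := ⟨k - 2, by omega⟩
    have h2 : 2 ^ (m + 2) = 2 ^ (m + 1) + 2 ^ (m + 1) := by ring
    have : S1.card + S1.card = 2 ^ (m + 1) + 2 ^ (m + 1) := by
      rw [← hcard_eq] at hsum; omega
    simpa using by omega
  -- Entry characterizations
  have hP1 : ∀ w : SimplexIdx k, Pmat k v w = 1 ↔ v.1 ⬝ᵥ w.1 = 1 := by
    intro w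
    simp only [Pmat, Matrix.of_apply]
    split_ifs with h
    · simp [h]
    · simp [h]
  have hP0 : ∀ w : SimplexIdx k, Pmat k v w = 0 ↔ v.1 ⬝ᵥ w.1 = 0 := by
    intro w
    simp only [Pmat, Matrix.of_apply]
    split_ifs with h
    · constructor
      · intro h1; exact absurd h1 one_ne_zero
      · intro h0; rw [h0] at h; exact absurd h (by decide)
    · have hd : v.1 ⬝ᵥ w.1 = 0 := by
        by_contra hne; exact h (hone _ hne)
      simp [hd]
  -- count of ones
  have hones : (Finset.univ.filter fun w => Pmat k v w = 1).card = S1.card := by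
    apply Finset.card_bij (fun x _ => x.1)
    · intro a ha
      simp only [Finset.mem_filter, Finset.mem_univ, true_and, hS1] at ha ⊢
      exact (hP1 a).mp ha
    · intro a _ b _ hab; exact Subtype.ext hab
    · intro b hb
      simp only [hS1, Finset.mem_filter, Finset.mem_univ, true_and] at hb
      have hbne : b ≠ 0 := by
        intro h0; rw [h0] at hb; simp at hb
      refine ⟨⟨b, hbne⟩, ?_, rfl⟩
      simp only [Finset.mem_filter, Finset.mem_univ, true_and]
      exact (hP1 ⟨b, hbne⟩).mpr hb
  -- count of zeros
  have hzeros : (Finset.univ.filter fun w => Pmat k v w = 0).card = S0.card - 1 := by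
    have h0mem : (0 : Fin k → ZMod 2) ∈ S0 := by
      simp [hS0]
    rw [← Finset.card_erase_of_mem h0mem]
    apply Finset.card_bij (fun x _ => x.1)
    · intro a ha
      simp only [Finset.mem_filter, Finset.mem_univ, true_and] at ha
      exact Finset.mem_erase.mpr ⟨a.2, by simp [hS0, (hP0 a).mp ha]⟩
    · intro a _ b _ hab; exact Subtype.ext hab
    · intro b hb
      obtain ⟨hbne, hb0⟩ := Finset.mem_erase.mp hb
      simp only [hS0, Finset.mem_filter, Finset.mem_univ, true_and] at hb0
      refine ⟨⟨b, hbne⟩, ?_, rfl⟩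
      simp only [Finset.mem_filter, Finset.mem_univ, true_and]
      exact (hP0 ⟨b, hbne⟩).mpr hb0
  have hS0card : S0.card = 2 ^ (k - 1) := by rw [← hcard_eq]; exact hS1card
  exact ⟨by rw [hones, hS1card], by rw [hzeros, hS0card]⟩
end

section
/- For k ≥ 2 and 1 ≤ m ≤ k−1, the MacDonald code MD_{k,m}, generated by the last 2^k − 2^m columns of the simplex generator matrix S_k (i.e., the columns that are nonzero in at least one of the last k − m coordinates), is a binary linear code of length 2^k − 2^m, dimension k, and minimum distance 2^{k−1} − 2^{m−1}, with every nonzero codeword of weight either 2^{k−1} − 2^{m−1} or 2^{k−1}. -/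
open Matrix

/-- Column index type of the MacDonald code `MD_{k,m}`: the nonzero vectors of `F₂^k`
that are nonzero in at least one of the last `k - m` coordinates. -/
abbrev MDIdx (k m : ℕ) := {v : Fin k → ZMod 2 // ∃ i : Fin k, m ≤ (i : ℕ) ∧ v i ≠ 0}

/-- Generator matrix of the MacDonald code `MD_{k,m}`. -/
def mdGen (k m : ℕ) : Matrix (Fin k) (MDIdx k m) (ZMod 2) :=
  Matrix.of fun i v => v.1 i

/-- The MacDonald code `MD_{k,m}`. -/
def mdCode (k m : ℕ) : Submodule (ZMod 2) (MDIdx k m → ZMod 2) :=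
  Submodule.span (ZMod 2) (Set.range fun i => mdGen k m i)

section Aux

lemma vadd_self {n : ℕ} (t : Fin n → ZMod 2) : t + t = 0 :=
  funext fun _ => CharTwo.add_self_eq_zero _

lemma zmod2_ne_zero (a : ZMod 2) : a ≠ 0 ↔ a = 1 := by revert a; decide

lemma half_card {n : ℕ} (u t : Fin n → ZMod 2) (ht : u ⬝ᵥ t = 1)
    (T : Finset (Fin n → ZMod 2)) (hT : ∀ v ∈ T, v + t ∈ T) :
    2 * (T.filter fun v => u ⬝ᵥ v = 1).card = T.card := by
  have key : (T.filter fun v => u ⬝ᵥ v = 1).card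
      = (T.filter fun v => ¬ (u ⬝ᵥ v = 1)).card := by
    apply Finset.card_bij (fun v _ => v + t)
    · intro v hv
      simp only [Finset.mem_filter] at hv ⊢
      refine ⟨hT v hv.1, ?_⟩
      rw [dotProduct_add, hv.2, ht]
      decide
    · intro a _ b _ hab
      have : a + t + t = b + t + t := by rw [hab]
      simpa [add_assoc, vadd_self] using this
    · intro b hb
      simp only [Finset.mem_filter] at hb
      refine ⟨b + t, Finset.mem_filter.2 ⟨hT b hb.1, ?_⟩, by
        simp [add_assoc, vadd_self]⟩
      rw [dotProduct_add, ht]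
      have : u ⬝ᵥ b = 0 := by
        have := hb.2; revert this; generalize u ⬝ᵥ b = a; revert a; decide
      rw [this]; decide
  have := Finset.card_filter_add_card_filter_not (s := T)
    (p := fun v => u ⬝ᵥ v = 1)
  omega

lemma card_univ_vec (k : ℕ) : (Finset.univ : Finset (Fin k → ZMod 2)).card = 2 ^ k := by
  simp [Finset.card_univ]

lemma card_supported {k m : ℕ} (hm : m ≤ k) :
    ((Finset.univ : Finset (Fin k → ZMod 2)).filter
      fun v => ∀ i : Fin k, m ≤ (i : ℕ) → v i = 0).card = 2 ^ m := by
  have h : ((Finset.univ : Finset (Fin k → ZMod 2)).filter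
      fun v => ∀ i : Fin k, m ≤ (i : ℕ) → v i = 0).card
      = (Finset.univ : Finset (Fin m → ZMod 2)).card := by
    refine Finset.card_bij' (fun v _ => fun j : Fin m => v (Fin.castLE hm j))
      (fun w _ => fun i : Fin k => if h : (i : ℕ) < m then w ⟨i, h⟩ else 0)
      (fun v _ => Finset.mem_univ _) ?_ ?_ ?_
    · intro w _
      simp only [Finset.mem_filter]
      refine ⟨Finset.mem_univ _, fun i hi => ?_⟩
      exact dif_neg (by omega)
    · intro v hv
      simp only [Finset.mem_filter] at hv
      funext i
      by_cases h : (i : ℕ) < m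
      · simp only [dif_pos h]
        congr 1
      · simp only [dif_neg h]
        exact (hv.2 i (le_of_not_gt h)).symm
    · intro w _
      funext j
      simp [Fin.coe_castLE, j.2, Fin.eta]
  rw [h]
  simp [Finset.card_univ]

lemma arith_pos {M K a b c : ℕ} (hM : 1 ≤ M) (hK : 1 ≤ K) (hMK : M ≤ K)
    (h1 : a + b = c) (h2 : 2 * b = 2 ^ M) (h3 : 2 * c = 2 ^ K) :
    a = 2 ^ (K - 1) - 2 ^ (M - 1) := by
  have e1 : 2 ^ K = 2 * 2 ^ (K - 1) := by
    conv_lhs => rw [show K = (K - 1) + 1 by omega]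
    ring
  have e2 : 2 ^ M = 2 * 2 ^ (M - 1) := by
    conv_lhs => rw [show M = (M - 1) + 1 by omega]
    ring
  have e3 : 2 ^ (M - 1) ≤ 2 ^ (K - 1) := Nat.pow_le_pow_right (by norm_num) (by omega)
  omega

lemma arith_neg {K a c : ℕ} (hK : 1 ≤ K) (h1 : a + 0 = c) (h3 : 2 * c = 2 ^ K) :
    a = 2 ^ (K - 1) := by
  have e1 : 2 ^ K = 2 * 2 ^ (K - 1) := by
    conv_lhs => rw [show K = (K - 1) + 1 by omega]
    ring
  omega

lemma arith_card {M K a : ℕ} (h : a + 2 ^ M = 2 ^ K) : a = 2 ^ K - 2 ^ M := by omega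

lemma weight_eq {k m : ℕ} (hm1 : 1 ≤ m) (hm2 : m ≤ k - 1) (hk : 2 ≤ k)
    (u : Fin k → ZMod 2) (hu : u ≠ 0) :
    hammingNorm (fun v : MDIdx k m => u ⬝ᵥ v.1)
      = if ∃ j : Fin k, (j : ℕ) < m ∧ u j ≠ 0 then 2 ^ (k - 1) - 2 ^ (m - 1)
        else 2 ^ (k - 1) := by
  have hmk : m ≤ k := by omega
  have h1 : hammingNorm (fun v : MDIdx k m => u ⬝ᵥ v.1)
      = ((Finset.univ : Finset (Fin k → ZMod 2)).filter
          fun v => (∃ i : Fin k, m ≤ (i : ℕ) ∧ v i ≠ 0) ∧ u ⬝ᵥ v = 1).card := by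
    unfold hammingNorm
    apply Finset.card_bij (fun (v : MDIdx k m) _ => v.1)
    · intro v hv
      simp only [Finset.mem_filter] at hv ⊢
      exact ⟨Finset.mem_univ _, v.2, (zmod2_ne_zero _).1 hv.2⟩
    · intro a _ b _ hab; exact Subtype.ext hab
    · intro b hb
      simp only [Finset.mem_filter] at hb
      exact ⟨⟨b, hb.2.1⟩, Finset.mem_filter.2 ⟨Finset.mem_univ _,
        (zmod2_ne_zero _).2 hb.2.2⟩, rfl⟩
  obtain ⟨j0, hj0⟩ : ∃ j, u j ≠ 0 := by
    by_contra h; push_neg at h; exact hu (funext h)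
  have huj0 : u j0 = 1 := (zmod2_ne_zero _).1 hj0
  have hN1 : 2 * ((Finset.univ : Finset (Fin k → ZMod 2)).filter
      fun v => u ⬝ᵥ v = 1).card = 2 ^ k := by
    rw [← card_univ_vec k]
    have hdot0 : u ⬝ᵥ Pi.single j0 1 = 1 := by
      rw [dotProduct_single, huj0]; decide
    exact half_card u (Pi.single j0 1) hdot0 _ (fun v _ => Finset.mem_univ _)
  have hsplit : ((Finset.univ : Finset (Fin k → ZMod 2)).filter
        fun v => (∃ i : Fin k, m ≤ (i : ℕ) ∧ v i ≠ 0) ∧ u ⬝ᵥ v = 1).card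
      + ((Finset.univ : Finset (Fin k → ZMod 2)).filter
        fun v => (∀ i : Fin k, m ≤ (i : ℕ) → v i = 0) ∧ u ⬝ᵥ v = 1).card
      = ((Finset.univ : Finset (Fin k → ZMod 2)).filter
        fun v => u ⬝ᵥ v = 1).card := by
    have e1 : ((Finset.univ : Finset (Fin k → ZMod 2)).filter
          fun v => (∃ i : Fin k, m ≤ (i : ℕ) ∧ v i ≠ 0) ∧ u ⬝ᵥ v = 1)
        = ((Finset.univ : Finset (Fin k → ZMod 2)).filter
          fun v => u ⬝ᵥ v = 1).filter
          fun v => (∃ i : Fin k, m ≤ (i : ℕ) ∧ v i ≠ 0) := by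
      rw [Finset.filter_filter]
      exact Finset.filter_congr fun v _ => by tauto
    have e2 : ((Finset.univ : Finset (Fin k → ZMod 2)).filter
          fun v => (∀ i : Fin k, m ≤ (i : ℕ) → v i = 0) ∧ u ⬝ᵥ v = 1)
        = ((Finset.univ : Finset (Fin k → ZMod 2)).filter
          fun v => u ⬝ᵥ v = 1).filter
          fun v => ¬ (∃ i : Fin k, m ≤ (i : ℕ) ∧ v i ≠ 0) := by
      rw [Finset.filter_filter]
      apply Finset.filter_congr
      intro v _
      constructor
      · rintro ⟨h1', h2'⟩; exact ⟨h2', by push_neg; intro i hi; exact h1' i hi⟩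
      · rintro ⟨h2', h1'⟩; push_neg at h1'; exact ⟨h1', h2'⟩
    rw [e1, e2]
    exact Finset.card_filter_add_card_filter_not _
  by_cases hc : ∃ j : Fin k, (j : ℕ) < m ∧ u j ≠ 0
  · rw [if_pos hc]
    obtain ⟨j1, hj1m, hj1⟩ := hc
    have huj1 : u j1 = 1 := (zmod2_ne_zero _).1 hj1
    -- N2 = 2^(m-1)
    have hN2 : 2 * ((Finset.univ : Finset (Fin k → ZMod 2)).filter
        fun v => (∀ i : Fin k, m ≤ (i : ℕ) → v i = 0) ∧ u ⬝ᵥ v = 1).card = 2 ^ m := by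
      have e3 : ((Finset.univ : Finset (Fin k → ZMod 2)).filter
            fun v => (∀ i : Fin k, m ≤ (i : ℕ) → v i = 0) ∧ u ⬝ᵥ v = 1)
          = ((Finset.univ : Finset (Fin k → ZMod 2)).filter
            fun v => ∀ i : Fin k, m ≤ (i : ℕ) → v i = 0).filter
            fun v => u ⬝ᵥ v = 1 := by
        rw [Finset.filter_filter]
      rw [e3, ← card_supported hmk]
      have hdot1 : u ⬝ᵥ Pi.single j1 1 = 1 := by
        rw [dotProduct_single, huj1]; decide
      apply half_card u (Pi.single j1 1) hdot1
      intro v hv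
      simp only [Finset.mem_filter] at hv ⊢
      refine ⟨Finset.mem_univ _, fun i hi => ?_⟩
      have hne : j1 ≠ i := fun h => absurd hj1m (by rw [h]; exact not_lt.2 hi)
      rw [Pi.add_apply, hv.2 i hi, Pi.single_eq_of_ne' hne, add_zero]
    rw [h1]
    exact arith_pos hm1 (Nat.one_le_of_lt hk) hmk hsplit hN2 hN1
  · rw [if_neg hc]
    push_neg at hc
    have hN2 : ((Finset.univ : Finset (Fin k → ZMod 2)).filter
        fun v => (∀ i : Fin k, m ≤ (i : ℕ) → v i = 0) ∧ u ⬝ᵥ v = 1).card = 0 := by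
      rw [Finset.card_eq_zero]
      apply Finset.filter_eq_empty_iff.2
      intro v _
      rintro ⟨hsupp, hdot⟩
      have : u ⬝ᵥ v = 0 := by
        apply Finset.sum_eq_zero
        intro i _
        by_cases h : (i : ℕ) < m
        · rw [hc i h, zero_mul]
        · rw [hsupp i (le_of_not_gt h), mul_zero]
      rw [this] at hdot
      exact one_ne_zero hdot.symm
    rw [hN2] at hsplit
    rw [h1]
    exact arith_neg (Nat.one_le_of_lt hk) hsplit hN1

lemma mdCode_eq_range (k m : ℕ) :
    mdCode k m = LinearMap.range (mdGen k m).vecMulLinear := by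
  rw [range_vecMulLinear]
  rfl

lemma mem_mdCode {k m : ℕ} (x : MDIdx k m → ZMod 2) :
    x ∈ mdCode k m ↔ ∃ u : Fin k → ZMod 2, x = fun v => u ⬝ᵥ v.1 := by
  rw [mdCode_eq_range]
  constructor
  · rintro ⟨u, rfl⟩
    exact ⟨u, rfl⟩
  · rintro ⟨u, rfl⟩
    exact ⟨u, rfl⟩

end Aux

/-- For `k ≥ 2` and `1 ≤ m ≤ k - 1`, the MacDonald code `MD_{k,m}` is a
binary linear code of length `2^k - 2^m`, dimension `k`, minimum distance
`2^(k-1) - 2^(m-1)`, and every nonzero codeword has weight `2^(k-1) - 2^(m-1)` or `2^(k-1)`. -/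
theorem macdonald_code_props {k m : ℕ} (hk : 2 ≤ k) (hm1 : 1 ≤ m) (hm2 : m ≤ k - 1) :
    Fintype.card (MDIdx k m) = 2 ^ k - 2 ^ m ∧
    Module.finrank (ZMod 2) (mdCode k m) = k ∧
    MinDist (mdCode k m) (2 ^ (k - 1) - 2 ^ (m - 1)) ∧
    ∀ x ∈ mdCode k m, x ≠ 0 →
      hammingNorm x = 2 ^ (k - 1) - 2 ^ (m - 1) ∨ hammingNorm x = 2 ^ (k - 1) := by
  have hmk : m ≤ k := by omega
  have hkm1 : m ≤ k - 1 := hm2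
  -- part 1 : length
  have part1 : Fintype.card (MDIdx k m) = 2 ^ k - 2 ^ m := by
    rw [Fintype.card_subtype]
    have := Finset.card_filter_add_card_filter_not
      (s := (Finset.univ : Finset (Fin k → ZMod 2)))
      (p := fun v => ∃ i : Fin k, m ≤ (i : ℕ) ∧ v i ≠ 0)
    have hneg : ((Finset.univ : Finset (Fin k → ZMod 2)).filter
        fun v => ¬ ∃ i : Fin k, m ≤ (i : ℕ) ∧ v i ≠ 0).card = 2 ^ m := by
      rw [← card_supported hmk]
      congr 1
      apply Finset.filter_congr
      intro v _
      simp only [not_exists, not_and, ne_eq, not_not]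
    rw [card_univ_vec, hneg] at this
    exact arith_card this
  -- injectivity of u ↦ (v ↦ u ⬝ᵥ v)
  have hinj : Function.Injective (mdGen k m).vecMulLinear := by
    rw [injective_iff_map_eq_zero]
    intro u hu
    have heval : ∀ v : MDIdx k m, u ⬝ᵥ v.1 = 0 := fun v => congrFun hu v
    obtain ⟨e, hev⟩ : ∃ e : Fin k, (e : ℕ) = k - 1 := ⟨⟨k - 1, by omega⟩, rfl⟩
    have hhigh : ∀ j : Fin k, m ≤ (j : ℕ) → u j = 0 := by
      intro j hj
      have := heval ⟨Pi.single j 1, ⟨j, hj, by simp⟩⟩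
      rwa [dotProduct_single, mul_one] at this
    funext j
    by_cases hj : m ≤ (j : ℕ)
    · exact hhigh j hj
    · have hje : j ≠ e := by
        intro h
        rw [h, hev] at hj
        omega
      have hme : m ≤ (e : ℕ) := by omega
      have hmem : ∃ i : Fin k, m ≤ (i : ℕ) ∧ ((Pi.single j 1 + Pi.single e 1 : Fin k → ZMod 2)) i ≠ 0 := by
        refine ⟨e, hme, ?_⟩
        have h1 : (Pi.single j 1 + Pi.single e 1 : Fin k → ZMod 2) e = 1 := by
          rw [Pi.add_apply, Pi.single_eq_of_ne hje.symm, Pi.single_eq_same, zero_add]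
        rw [h1]; norm_num
      have := heval ⟨(Pi.single j 1 + Pi.single e 1 : Fin k → ZMod 2), hmem⟩
      rw [dotProduct_add, dotProduct_single, dotProduct_single,
        mul_one, mul_one, hhigh e hme, add_zero] at this
      exact this
  -- part 2 : dimension
  have part2 : Module.finrank (ZMod 2) (mdCode k m) = k := by
    rw [mdCode_eq_range, LinearMap.finrank_range_of_inj hinj]
    simp [Module.finrank_fintype_fun_eq_card]
  -- part 4 : weights
  have hle : 2 ^ (m - 1) ≤ 2 ^ (k - 1) := Nat.pow_le_pow_right (by norm_num) (by omega)
  have hposd : 0 < 2 ^ (k - 1) - 2 ^ (m - 1) :=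
    Nat.sub_pos_of_lt (Nat.pow_lt_pow_right (by norm_num) (by omega))
  have part4 : ∀ x ∈ mdCode k m, x ≠ 0 →
      hammingNorm x = 2 ^ (k - 1) - 2 ^ (m - 1) ∨ hammingNorm x = 2 ^ (k - 1) := by
    intro x hx hx0
    obtain ⟨u, rfl⟩ := (mem_mdCode x).1 hx
    have hu : u ≠ 0 := by
      rintro rfl
      exact hx0 (funext fun v => by simp)
    rw [weight_eq hm1 hm2 hk u hu]
    by_cases hc : ∃ j : Fin k, (j : ℕ) < m ∧ u j ≠ 0
    · rw [if_pos hc]; left; rfl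
    · rw [if_neg hc]; right; rfl
  -- min distance
  have part3 : MinDist (mdCode k m) (2 ^ (k - 1) - 2 ^ (m - 1)) := by
    constructor
    · intro x hx hx0
      rcases part4 x hx hx0 with h | h
      · exact h.ge
      · exact le_of_le_of_eq (Nat.sub_le _ _) h.symm
    · obtain ⟨j0, hj0v⟩ : ∃ j0 : Fin k, (j0 : ℕ) = 0 := ⟨⟨0, by omega⟩, rfl⟩
      have hu : (Pi.single j0 1 : Fin k → ZMod 2) ≠ 0 := by
        intro h
        have := congrFun h j0
        rw [Pi.single_eq_same] at this
        exact one_ne_zero this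
      have hw : hammingNorm (fun v : MDIdx k m => (Pi.single j0 1 : Fin k → ZMod 2) ⬝ᵥ v.1)
          = 2 ^ (k - 1) - 2 ^ (m - 1) := by
        rw [weight_eq hm1 hm2 hk _ hu, if_pos ⟨j0, by omega, by
          rw [Pi.single_eq_same]; norm_num⟩]
      refine ⟨fun v => (Pi.single j0 1 : Fin k → ZMod 2) ⬝ᵥ v.1,
        (mem_mdCode _).2 ⟨_, rfl⟩, ?_, hw⟩
      intro h0
      rw [h0, hammingNorm_zero] at hw
      exact absurd hw (Nat.ne_of_lt hposd)
  exact ⟨part1, part2, part3, part4⟩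
end

section
/- For every integer m ≥ 1, any binary linear code with parameters [15m, 4, 8m] is self-orthogonal, i.e., equivalent to the juxtaposition of m copies of the [15,4,8] simplex code S₄. -/
open Matrix

/-- Generator matrix of the juxtaposition of `s` copies of the simplex code `S_k`. -/
def juxtSimplexGen (s k : ℕ) : Matrix (Fin k) (Fin s × SimplexIdx k) (ZMod 2) :=
  Matrix.of fun i p => p.2.1 i

/-- The juxtaposition of `s` copies of the simplex code `S_k`. -/
def juxtSimplexCode (s k : ℕ) : Submodule (ZMod 2) (Fin s × SimplexIdx k → ZMod 2) :=
  Submodule.span (ZMod 2) (Set.range fun i => juxtSimplexGen s k i)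

open Finset


lemma zmod2_ne_iff : ∀ a : ZMod 2, a ≠ 0 ↔ a = 1 := by decide

lemma aux_mul2 : ∀ a b : ZMod 2, a * b = if a ≠ 0 ∧ b ≠ 0 then 1 else 0 := by decide

lemma aux_ptwise : ∀ a b : ZMod 2,
    ((if a ≠ 0 ∧ b ≠ 0 then 1 else 0) + (if a ≠ 0 ∧ b ≠ 0 then 1 else 0)
      + (if a + b ≠ 0 then 1 else 0) : ℕ)
      = (if a ≠ 0 then 1 else 0) + (if b ≠ 0 then 1 else 0) := by decide

lemma aux_add_self : ∀ a : ZMod 2, a + a = 0 := by decide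

lemma aux_d1 : ∀ v : Fin 4 → ZMod 2, v ≠ 0 →
    ((univ : Finset (Fin 4 → ZMod 2)).filter fun c => c ≠ 0 ∧ v ⬝ᵥ c = 1).card = 8 := by decide

lemma aux_d1' : ∀ v : Fin 4 → ZMod 2, v ≠ 0 →
    ((univ : Finset (Fin 4 → ZMod 2)).filter fun c => v ⬝ᵥ c = 1).card = 8 := by decide

lemma aux_d2 : ∀ v₀ v : Fin 4 → ZMod 2, v₀ ≠ 0 → v ≠ 0 → v ≠ v₀ →
    ((univ : Finset (Fin 4 → ZMod 2)).filter fun c => v₀ ⬝ᵥ c = 1 ∧ v ⬝ᵥ c = 1).card = 4 := by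
  decide

lemma aux_card15 : ((univ : Finset (Fin 4 → ZMod 2)).filter fun c => c ≠ 0).card = 15 := by decide

set_option maxHeartbeats 2000000 in
/-- For every `m ≥ 1`, any binary `[15m, 4, 8m]` code (with no zero
coordinates) is self-orthogonal; indeed it is equivalent, via a permutation of
coordinates, to the juxtaposition of `m` copies of the `[15,4,8]` simplex code `S₄`. -/
theorem code_15m_4_8m_self_orthogonal (m : ℕ) (hm : 1 ≤ m)
    (C : Submodule (ZMod 2) (Fin (15 * m) → ZMod 2))
    (hdim : Module.finrank (ZMod 2) C = 4)
    (hd : MinDist C (8 * m))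
    (hnz : ∀ i, ∃ x ∈ C, x i ≠ 0) :
    C ≤ dualCode C ∧
    ∃ e : Fin (15 * m) ≃ (Fin m × SimplexIdx 4),
      ∀ x : Fin (15 * m) → ZMod 2,
        x ∈ C ↔ (fun p => x (e.symm p)) ∈ juxtSimplexCode m 4 := by
  classical
  have hCfd : FiniteDimensional (ZMod 2) C := inferInstance
  let b : Module.Basis (Fin 4) (ZMod 2) C := Module.finBasisOfFinrankEq _ _ hdim
  set B : Fin 4 → (Fin (15 * m) → ZMod 2) := fun j => (b j : Fin (15 * m) → ZMod 2) with hB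
  have hBli : LinearIndependent (ZMod 2) B := b.linearIndependent.map' C.subtype C.ker_subtype
  have hBspan : Submodule.span (ZMod 2) (Set.range B) = C := by
    have h1 : Set.range B = C.subtype '' Set.range b := by
      rw [← Set.range_comp]; rfl
    rw [h1, ← Submodule.map_span, b.span_eq, Submodule.map_top, Submodule.range_subtype]
  set φ : Fin (15 * m) → (Fin 4 → ZMod 2) := fun i j => B j i with hφdef
  set xc : (Fin 4 → ZMod 2) → (Fin (15 * m) → ZMod 2) := fun c => ∑ j, c j • B j with hxc
  have hxci : ∀ c i, xc c i = φ i ⬝ᵥ c := by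
    intro c i
    simp only [hxc, Finset.sum_apply, Pi.smul_apply, smul_eq_mul, dotProduct]
    exact Finset.sum_congr rfl fun j _ => mul_comm _ _
  have hmemC : ∀ x, x ∈ C ↔ ∃ c, xc c = x := by
    intro x; rw [← hBspan]; exact Submodule.mem_span_range_iff_exists_fun _
  have hxcC : ∀ c, xc c ∈ C := fun c => (hmemC _).2 ⟨c, rfl⟩
  have hxc0 : ∀ c, xc c = 0 → c = 0 := by
    intro c h
    exact funext (Fintype.linearIndependent_iff.1 hBli c h)
  have hφne : ∀ i, φ i ≠ 0 := by
    intro i h0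
    obtain ⟨x, hxC, hxi⟩ := hnz i
    obtain ⟨c, rfl⟩ := (hmemC x).1 hxC
    rw [hxci, h0] at hxi
    exact hxi (zero_dotProduct c)
  have hwt : ∀ c, hammingNorm (xc c) = (univ.filter fun i => φ i ⬝ᵥ c = 1).card := by
    intro c
    show (univ.filter fun i => xc c i ≠ 0).card = _
    congr 1
    apply Finset.filter_congr
    intro i _
    rw [hxci]
    exact zmod2_ne_iff _
  -- all nonzero codewords have weight 8m
  set s : Finset (Fin 4 → ZMod 2) := univ.filter fun c => c ≠ 0 with hs
  have hsum : ∑ c ∈ s, (8 * m) = ∑ c ∈ s, hammingNorm (xc c) := by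
    have hR : ∑ c ∈ s, hammingNorm (xc c) = 15 * m * 8 := by
      calc ∑ c ∈ s, hammingNorm (xc c)
          = ∑ c ∈ s, ∑ i : Fin (15 * m), if φ i ⬝ᵥ c = 1 then 1 else 0 := by
            refine Finset.sum_congr rfl fun c _ => ?_
            rw [hwt, Finset.card_filter]
        _ = ∑ i : Fin (15 * m), ∑ c ∈ s, if φ i ⬝ᵥ c = 1 then 1 else 0 := Finset.sum_comm
        _ = ∑ i : Fin (15 * m), (s.filter fun c => φ i ⬝ᵥ c = 1).card := by
            refine Finset.sum_congr rfl fun i _ => ?_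
            rw [Finset.card_filter]
        _ = ∑ _i : Fin (15 * m), 8 := by
            refine Finset.sum_congr rfl fun i _ => ?_
            rw [hs, Finset.filter_filter]
            exact aux_d1 _ (hφne i)
        _ = 15 * m * 8 := by simp [Finset.card_univ, mul_comm]
    have hL : ∑ c ∈ s, (8 * m) = 15 * m * 8 := by
      rw [Finset.sum_const, hs, aux_card15, smul_eq_mul]; ring
    rw [hL, hR]
  have hwt8 : ∀ c : Fin 4 → ZMod 2, c ≠ 0 → hammingNorm (xc c) = 8 * m := by
    have hle : ∀ c ∈ s, 8 * m ≤ hammingNorm (xc c) := by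
      intro c hc
      rw [hs, Finset.mem_filter] at hc
      exact hd.1 _ (hxcC c) (fun h0 => hc.2 (hxc0 c h0))
    intro c hc
    exact ((Finset.sum_eq_sum_iff_of_le hle).1 hsum c (by rw [hs]; simp [hc])).symm
  -- self-orthogonality
  have hso : C ≤ dualCode C := by
    intro x hx
    obtain ⟨c, rfl⟩ := (hmemC x).1 hx
    show ∀ y ∈ C, xc c ⬝ᵥ y = 0
    intro y hy
    obtain ⟨c', rfl⟩ := (hmemC y).1 hy
    have hdot : xc c ⬝ᵥ xc c'
        = (((univ.filter fun i => xc c i ≠ 0 ∧ xc c' i ≠ 0).card : ℕ) : ZMod 2) := by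
      rw [Finset.card_filter, Nat.cast_sum, dotProduct]
      refine Finset.sum_congr rfl fun i _ => ?_
      rw [aux_mul2]
      split <;> simp
    have hkey : (univ.filter fun i => xc c i ≠ 0 ∧ xc c' i ≠ 0).card
        + (univ.filter fun i => xc c i ≠ 0 ∧ xc c' i ≠ 0).card
        + hammingNorm (xc c + xc c') = hammingNorm (xc c) + hammingNorm (xc c') := by
      have h1 : ∀ z : Fin (15 * m) → ZMod 2,
          hammingNorm z = ∑ i : Fin (15 * m), if z i ≠ 0 then 1 else 0 := fun z =>
        Finset.card_filter _ _
      have h2 : ∑ i : Fin (15 * m), ((if xc c i ≠ 0 ∧ xc c' i ≠ 0 then 1 else 0)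
            + (if xc c i ≠ 0 ∧ xc c' i ≠ 0 then 1 else 0)
            + (if (xc c + xc c') i ≠ 0 then (1 : ℕ) else 0))
          = ∑ i : Fin (15 * m), ((if xc c i ≠ 0 then 1 else 0)
            + (if xc c' i ≠ 0 then (1 : ℕ) else 0)) := by
        apply Finset.sum_congr rfl
        intro i _
        rw [Pi.add_apply]
        exact aux_ptwise _ _
      simp only [Finset.sum_add_distrib] at h2
      rw [h1, h1, h1, Finset.card_filter]
      exact h2
    have heven : 2 ∣ (univ.filter fun i => xc c i ≠ 0 ∧ xc c' i ≠ 0).card := by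
      by_cases hc0 : c = 0
      · subst hc0
        have : xc 0 = 0 := by simp [hxc]
        rw [this]
        simp
      by_cases hc'0 : c' = 0
      · subst hc'0
        have : xc 0 = 0 := by simp [hxc]
        rw [this]
        simp
      by_cases hcc : c = c'
      · subst hcc
        have hz : xc c + xc c = 0 := funext fun i => aux_add_self (xc c i)
        rw [hz, hwt8 c hc0] at hkey
        have h0 : hammingNorm (0 : Fin (15 * m) → ZMod 2) = 0 := by simp [hammingNorm]
        rw [h0] at hkey
        omega
      · have hsumne : c + c' ≠ 0 := by
          intro h
          apply hcc
          funext j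
          have := congrFun h j
          simp only [Pi.add_apply, Pi.zero_apply] at this
          revert this
          revert hcc
          generalize c j = a; generalize c' j = a'
          intro _; revert a a'; decide
        have hxcadd : xc c + xc c' = xc (c + c') := by
          simp [hxc, ← Finset.sum_add_distrib, add_smul]
        rw [hxcadd, hwt8 _ hsumne, hwt8 _ hc0, hwt8 _ hc'0] at hkey
        omega
    rw [hdot]
    exact (ZMod.natCast_eq_zero_iff _ 2).2 heven
  -- fiber counts
  set nv : (Fin 4 → ZMod 2) → ℕ := fun v => (univ.filter fun i => φ i = v).card with hnv
  have hfib : ∀ c : Fin 4 → ZMod 2, c ≠ 0 →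
      ∑ v ∈ univ.filter (fun v : Fin 4 → ZMod 2 => v ⬝ᵥ c = 1), nv v = 8 * m := by
    intro c hc
    have h1 : (univ.filter fun i => φ i ⬝ᵥ c = 1).card = 8 * m := by
      rw [← hwt8 c hc, hwt]
    rw [← h1, Finset.card_eq_sum_card_fiberwise
      (f := φ) (t := univ.filter fun v => v ⬝ᵥ c = 1)
      (fun i hi => by simp only [Finset.mem_coe, Finset.mem_filter] at hi ⊢; exact ⟨Finset.mem_univ _, hi.2⟩)]
    refine Finset.sum_congr rfl fun v hv => ?_
    rw [Finset.mem_filter] at hv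
    rw [Finset.filter_filter]
    show (univ.filter fun i => φ i = v).card = _
    congr 1
    apply Finset.filter_congr
    intro i _
    constructor
    · intro h; exact ⟨by rw [h]; exact hv.2, h⟩
    · exact And.right
  have htot : ∑ v ∈ s, nv v = 15 * m := by
    have h := Finset.card_eq_sum_card_fiberwise
      (s := (univ : Finset (Fin (15 * m)))) (f := φ) (t := s)
      (fun i _ => by rw [hs]; simp [hφne i])
    rw [Finset.card_univ, Fintype.card_fin] at h
    rw [← h]
  have hnvm : ∀ v : Fin 4 → ZMod 2, v ≠ 0 → nv v = m := by
    intro v₀ hv₀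
    set D : Finset (Fin 4 → ZMod 2) := univ.filter fun c => v₀ ⬝ᵥ c = 1 with hD
    have hDsum : ∑ c ∈ D, (∑ v ∈ univ.filter (fun v : Fin 4 → ZMod 2 => v ⬝ᵥ c = 1), nv v)
        = 64 * m := by
      have hterm : ∀ c ∈ D, (∑ v ∈ univ.filter (fun v : Fin 4 → ZMod 2 => v ⬝ᵥ c = 1), nv v)
          = 8 * m := by
        intro c hc
        refine hfib c fun h0 => ?_
        rw [hD, Finset.mem_filter, h0] at hc
        simpa using hc.2
      rw [Finset.sum_congr rfl hterm, Finset.sum_const, hD, aux_d1' v₀ hv₀, smul_eq_mul]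
      ring
    have hswap : ∑ c ∈ D, (∑ v ∈ univ.filter (fun v : Fin 4 → ZMod 2 => v ⬝ᵥ c = 1), nv v)
        = ∑ v : Fin 4 → ZMod 2, nv v * (D.filter fun c => v ⬝ᵥ c = 1).card := by
      calc ∑ c ∈ D, ∑ v ∈ univ.filter (fun v : Fin 4 → ZMod 2 => v ⬝ᵥ c = 1), nv v
          = ∑ c ∈ D, ∑ v : Fin 4 → ZMod 2, if v ⬝ᵥ c = 1 then nv v else 0 := by
            refine Finset.sum_congr rfl fun c _ => ?_
            rw [Finset.sum_filter]
        _ = ∑ v : Fin 4 → ZMod 2, ∑ c ∈ D, if v ⬝ᵥ c = 1 then nv v else 0 := Finset.sum_comm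
        _ = ∑ v : Fin 4 → ZMod 2, nv v * (D.filter fun c => v ⬝ᵥ c = 1).card := by
            refine Finset.sum_congr rfl fun v _ => ?_
            rw [← Finset.sum_filter, Finset.sum_const, smul_eq_mul, mul_comm]
    have hDcards : ∀ v : Fin 4 → ZMod 2,
        (D.filter fun c => v ⬝ᵥ c = 1).card = if v = v₀ then 8 else if v = 0 then 0 else 4 := by
      intro v
      rw [hD, Finset.filter_filter]
      by_cases h1 : v = v₀
      · subst h1
        rw [if_pos rfl]
        have : (univ.filter fun c : Fin 4 → ZMod 2 => v ⬝ᵥ c = 1 ∧ v ⬝ᵥ c = 1)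
            = univ.filter fun c : Fin 4 → ZMod 2 => v ⬝ᵥ c = 1 := by
          apply Finset.filter_congr; intro c _; simp
        rw [this]
        exact aux_d1' v hv₀
      · rw [if_neg h1]
        by_cases h2 : v = 0
        · subst h2
          rw [if_pos rfl]
          rw [Finset.card_eq_zero, Finset.filter_eq_empty_iff]
          intro c _
          simp [zero_dotProduct]
        · rw [if_neg h2]
          exact aux_d2 v₀ v hv₀ h2 h1
    have hv₀s : v₀ ∈ s := by rw [hs]; simp [hv₀]
    have hsplit1 : nv v₀ + ∑ v ∈ s.erase v₀, nv v = 15 * m := by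
      rw [← htot]
      exact Finset.add_sum_erase s nv hv₀s
    have huniv : ∑ v : Fin 4 → ZMod 2, nv v * (D.filter fun c => v ⬝ᵥ c = 1).card
        = 8 * nv v₀ + 4 * ∑ v ∈ s.erase v₀, nv v := by
      have hu : (univ : Finset (Fin 4 → ZMod 2)) = insert 0 s := by
        rw [hs, Finset.filter_ne']
        rw [Finset.insert_erase (Finset.mem_univ _)]
      rw [hu, Finset.sum_insert (by rw [hs]; simp)]
      rw [hDcards 0, if_neg (fun h => hv₀ h.symm), if_pos rfl, mul_zero, zero_add]
      rw [← Finset.add_sum_erase s _ hv₀s, hDcards v₀, if_pos rfl, Finset.mul_sum]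
      congr 1
      · ring
      · refine Finset.sum_congr rfl fun v hv => ?_
        rw [Finset.mem_erase, hs, Finset.mem_filter] at hv
        rw [hDcards v, if_neg hv.1, if_neg hv.2.2]
        ring
    have : 8 * nv v₀ + 4 * ∑ v ∈ s.erase v₀, nv v = 64 * m := by
      rw [← huniv, ← hswap, hDsum]
    omega
  -- build the equivalence
  set φ' : Fin (15 * m) → SimplexIdx 4 := fun i => ⟨φ i, hφne i⟩ with hφ'
  have hfibcard : ∀ v : SimplexIdx 4, Fintype.card {i // φ' i = v} = m := by
    intro v
    rw [Fintype.card_subtype]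
    have heq : (univ.filter fun i => φ' i = v) = univ.filter fun i => φ i = v.1 := by
      apply Finset.filter_congr
      intro i _
      constructor
      · intro h; rw [← h]
      · intro h; exact Subtype.ext h
    rw [heq]
    exact hnvm v.1 v.2
  let e₂ : ∀ v : SimplexIdx 4, {i // φ' i = v} ≃ Fin m := fun v =>
    Fintype.equivFinOfCardEq (hfibcard v)
  let e : Fin (15 * m) ≃ (Fin m × SimplexIdx 4) :=
    (Equiv.sigmaFiberEquiv φ').symm.trans ((Equiv.sigmaCongrRight e₂).trans
      ((Equiv.sigmaEquivProd (SimplexIdx 4) (Fin m)).trans (Equiv.prodComm _ _)))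
  have he : ∀ i, (e i).2 = φ' i := fun i => rfl
  refine ⟨hso, e, fun x => ?_⟩
  set T : (Fin (15 * m) → ZMod 2) ≃ₗ[ZMod 2] (Fin m × SimplexIdx 4 → ZMod 2) :=
    LinearEquiv.funCongrLeft (ZMod 2) (ZMod 2) e.symm with hT
  have hTapp : ∀ z : Fin (15 * m) → ZMod 2, T z = fun p => z (e.symm p) := by
    intro z
    rfl
  have hTB : ∀ j, T (B j) = juxtSimplexGen m 4 j := by
    intro j
    funext p
    rw [hTapp]
    show B j (e.symm p) = p.2.1 j
    have h1 : (e (e.symm p)).2 = φ' (e.symm p) := he _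
    rw [Equiv.apply_symm_apply] at h1
    have h2 : p.2.1 = φ (e.symm p) := by rw [h1]
    rw [h2]
  have hmap : Submodule.map (T : (Fin (15 * m) → ZMod 2) →ₗ[ZMod 2] _) C
      = juxtSimplexCode m 4 := by
    have himg : (⇑T '' Set.range B) = Set.range (fun j => juxtSimplexGen m 4 j) := by
      rw [← Set.range_comp]
      exact congrArg Set.range (funext hTB)
    rw [← hBspan, Submodule.map_span]
    simp only [LinearEquiv.coe_coe]
    rw [himg]
    rfl
  have hgoal : (fun p => x (e.symm p)) = T x := (hTapp x).symm
  rw [hgoal, ← hmap, Submodule.mem_map_equiv, LinearEquiv.symm_apply_apply]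
end

section
/- If a binary [n,k] code C is the juxtaposition of codes C₁ = [n₁,k] and C₂ = [n₂,k], i.e. generated by G = (G₁ | G₂) where Gᵢ generates Cᵢ, and C₁ is self-orthogonal, then G·Gᵀ = G₂·G₂ᵀ, so dim Hu(C) = k − rank(G₂G₂ᵀ) ≥ dim Hu(C₂). -/
open Matrix

lemma hullDim_eq_of_genMat {k : ℕ} {ι : Type*} [Fintype ι]
    (G : Matrix (Fin k) ι (ZMod 2)) (C : Submodule (ZMod 2) (ι → ZMod 2))
    (hG : IsGenMat G C) : hullDim C = k - (G * Gᵀ).rank := by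
  obtain ⟨hli, hspan⟩ := hG
  have hC : C = LinearMap.range G.vecMulLinear := by
    rw [range_vecMulLinear, ← hspan]
    rfl
  have hinj : Function.Injective G.vecMulLinear := by
    rw [← LinearMap.ker_eq_bot]
    ext x
    simp only [LinearMap.mem_ker, Submodule.mem_bot, Matrix.vecMulLinear_apply]
    constructor
    · intro hx
      have hx' : ∑ i, x i • G i = 0 := by
        ext j
        simpa [Matrix.vecMul, dotProduct] using congr_fun hx j
      exact funext fun i =>
        (Fintype.linearIndependent_iff.mp hli x hx') i
    · rintro rfl; simp
  have hkey : hull C = Submodule.map G.vecMulLinear (LinearMap.ker (G * Gᵀ).vecMulLinear) := by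
    ext x
    simp only [hull, Submodule.mem_inf, Submodule.mem_map, LinearMap.mem_ker,
      Matrix.vecMulLinear_apply]
    constructor
    · rintro ⟨hxC, hxD⟩
      rw [hC] at hxC
      obtain ⟨y, rfl⟩ := hxC
      simp only [Matrix.vecMulLinear_apply] at hxD ⊢
      refine ⟨y, ?_, rfl⟩
      ext j
      have hGj : G j ∈ C := by
        rw [← hspan]; exact Submodule.subset_span ⟨j, rfl⟩
      have h1 := hxD (G j) hGj
      rw [← Matrix.vecMul_vecMul, Matrix.vecMul_transpose]
      show G j ⬝ᵥ (y ᵥ* G) = 0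
      rw [dotProduct_comm]
      exact h1
    · rintro ⟨y, hy, rfl⟩
      refine ⟨by rw [hC]; exact ⟨y, rfl⟩, ?_⟩
      intro z hz
      rw [hC] at hz
      obtain ⟨w, rfl⟩ := hz
      simp only [Matrix.vecMulLinear_apply]
      nth_rewrite 2 [← Matrix.mulVec_transpose]
      rw [Matrix.dotProduct_mulVec, Matrix.vecMul_vecMul, hy]
      simp
  have hdim : hullDim C = Module.finrank (ZMod 2) (LinearMap.ker (G * Gᵀ).vecMulLinear) := by
    rw [hullDim, hkey]
    exact (LinearEquiv.finrank_eq
      ((LinearMap.ker (G * Gᵀ).vecMulLinear).equivMapOfInjective _ hinj)).symm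
  have hsym : (G * Gᵀ).vecMulLinear = (G * Gᵀ).mulVecLin := by
    conv_lhs => rw [show G * Gᵀ = (G * Gᵀ)ᵀ by
      rw [Matrix.transpose_mul, Matrix.transpose_transpose]]
    exact Matrix.vecMulLinear_transpose _
  have hrn := LinearMap.finrank_range_add_finrank_ker (G * Gᵀ).mulVecLin
  rw [Module.finrank_pi] at hrn
  simp only [Fintype.card_fin] at hrn
  rw [hdim, hsym, Matrix.rank]
  omega


/-- If `C` is the juxtaposition of `C₁ = [n₁,k]` and `C₂ = [n₂,k]`
(generated by `(G₁ | G₂)`), and `C₁` is self-orthogonal (`G₁·G₁ᵀ = 0`), then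
`G·Gᵀ = G₂·G₂ᵀ`, so `hullDim C = k - rank(G₂·G₂ᵀ)` and `hullDim C₂ ≤ hullDim C`. -/
theorem juxtaposition_hull {k n₁ n₂ : ℕ}
    (G₁ : Matrix (Fin k) (Fin n₁) (ZMod 2)) (G₂ : Matrix (Fin k) (Fin n₂) (ZMod 2))
    (C : Submodule (ZMod 2) (Fin n₁ ⊕ Fin n₂ → ZMod 2))
    (C₂ : Submodule (ZMod 2) (Fin n₂ → ZMod 2))
    (hG : IsGenMat (Matrix.of fun i => Sum.elim (G₁ i) (G₂ i)) C)
    (hG₂ : IsGenMat G₂ C₂)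
    (hso : G₁ * G₁ᵀ = 0) :
    (Matrix.of fun i => Sum.elim (G₁ i) (G₂ i)) * (Matrix.of fun i => Sum.elim (G₁ i) (G₂ i))ᵀ
        = G₂ * G₂ᵀ ∧
    hullDim C = k - (G₂ * G₂ᵀ).rank ∧
    hullDim C₂ ≤ hullDim C := by
  have h1 : (Matrix.of fun i => Sum.elim (G₁ i) (G₂ i)) *
      (Matrix.of fun i => Sum.elim (G₁ i) (G₂ i))ᵀ = G₂ * G₂ᵀ := by
    ext i j
    have := congr_fun (congr_fun hso i) j
    simp only [Matrix.mul_apply, Matrix.transpose_apply, Matrix.zero_apply] at this ⊢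
    simp [Fintype.sum_sum_type, this]
  have h2 := hullDim_eq_of_genMat _ C hG
  have h3 := hullDim_eq_of_genMat _ C₂ hG₂
  rw [h1] at h2
  exact ⟨h1, h2, by rw [h2, h3]⟩
end
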